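/- arXiv:1804.09501 — 2 statements merged into one kernel-verified Lean document; each statement's English description precedes it below -/
import Mathlib

section
/- (Uniform bound (4.27) for the second moment of the downcrossing time.) For every b > 0, with f(x) := 1/(3x³) − b/(2x²), one has limsup_{ε→0⁺} (1/ε³)·∫_{1/b}^∞ ∫_{y}^{∞} ∫_{1/b}^{y} (y·ỹ)^{−4}·exp( (1/ε²)·( −b³/6 − f(y) + f(w̃) − f(ỹ) ) ) dw̃ dỹ dy < ∞. -/
open MeasureTheory Real Set Filter
open scoped Topology

/-!
Write `c = 1 / b`. On `[c, ∞)` the function `f` is increasing with `f c = -b³/6`, so the exponent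
`-(f y - f w̃)/ε² - (f ỹ - f c)/ε²` is nonpositive; moreover `f v - f u ≥ (b⁵/32)(v - u)²` for
`c ≤ u ≤ v ≤ 2c` and `f v - f c ≥ b³/32` for `v ≥ 2c`. Each of the three integrations therefore
contributes a Laplace factor `O(ε)`: the `w̃`-integral is dominated by a Gaussian of width `ε`
centred at `y`, the `ỹ`-integral by the Gaussian weight around `c`, and, since `f ỹ ≥ f y`, half of
the `ỹ`-exponent can be moved onto `y` to produce the third factor.
-/

theorem Real.exp_neg_le_inv {x : ℝ} (hx : 0 < x) : exp (-x) ≤ x⁻¹ := by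
  rw [exp_neg]
  exact inv_anti₀ hx (by linarith [add_one_le_exp x])

-- The β-redex on the right is the shape `integral_sub_right_eq_self` and `comp_sub_right` match.
theorem exp_neg_mul_sub_sq_div_sq_eq (a ε m : ℝ) :
    (fun x => exp (-(a * (x - m) ^ 2) / ε ^ 2)) =
      fun x => (fun z => exp (-(a / ε ^ 2) * z ^ 2)) (x - m) := by
  funext x; ring_nf

theorem integrable_exp_neg_mul_sub_sq_div_sq {a ε : ℝ} (ha : 0 < a) (hε : ε ≠ 0) (m : ℝ) :
    Integrable fun x => exp (-(a * (x - m) ^ 2) / ε ^ 2) := by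
  rw [exp_neg_mul_sub_sq_div_sq_eq]
  exact (integrable_exp_neg_mul_sq (by positivity)).comp_sub_right m

theorem setIntegral_exp_neg_mul_sub_sq_div_sq_le {a ε : ℝ} (ha : 0 < a) (hε : 0 < ε)
    (m : ℝ) (s : Set ℝ) : ∫ x in s, exp (-(a * (x - m) ^ 2) / ε ^ 2) ≤ ε * √(π / a) := by
  calc ∫ x in s, exp (-(a * (x - m) ^ 2) / ε ^ 2)
      ≤ ∫ x, exp (-(a * (x - m) ^ 2) / ε ^ 2) :=
        setIntegral_le_integral (integrable_exp_neg_mul_sub_sq_div_sq ha hε.ne' m)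
          (Eventually.of_forall fun x => (exp_pos _).le)
    _ = √(π / (a / ε ^ 2)) := by
        rw [exp_neg_mul_sub_sq_div_sq_eq,
          integral_sub_right_eq_self (fun z => exp (-(a / ε ^ 2) * z ^ 2)), integral_gaussian]
    _ = ε * √(π / a) := by
        rw [div_div_eq_mul_div, mul_comm, mul_div_assoc, sqrt_mul (sq_nonneg ε), sqrt_sq hε.le]

theorem one_div_pow_eq_rpow_neg {t : ℝ} (ht : 0 ≤ t) (n : ℕ) : 1 / t ^ n = t ^ (-(n : ℝ)) := by
  rw [rpow_neg ht, rpow_natCast, one_div]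

theorem integrableOn_Ioi_one_div_pow {c : ℝ} (hc : 0 < c) (n : ℕ) :
    IntegrableOn (fun t : ℝ => 1 / t ^ (n + 2)) (Ioi c) :=
  (integrableOn_Ioi_rpow_of_lt (by push_cast; linarith) hc).congr_fun
    (fun t ht => (one_div_pow_eq_rpow_neg (hc.trans ht).le (n + 2)).symm) measurableSet_Ioi

theorem integral_Ioi_one_div_pow {c : ℝ} (hc : 0 < c) (n : ℕ) :
    ∫ t in Ioi c, 1 / t ^ (n + 2) = 1 / ((n + 1) * c ^ (n + 1)) := by
  rw [setIntegral_congr_fun measurableSet_Ioi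
      fun t ht => one_div_pow_eq_rpow_neg (hc.trans ht).le (n + 2),
    integral_Ioi_rpow_of_lt (by push_cast; linarith) hc,
    show -((n + 2 : ℕ) : ℝ) + 1 = -((n + 1 : ℕ) : ℝ) by push_cast; ring, rpow_neg hc.le,
    rpow_natCast]
  push_cast
  field_simp

namespace Downcrossing

noncomputable def potential (b x : ℝ) : ℝ := 1 / (3 * x ^ 3) - b / (2 * x ^ 2)

variable {b : ℝ}

theorem potential_one_div (hb : b ≠ 0) : potential b (1 / b) = -b ^ 3 / 6 := by
  unfold potential
  field_simp
  ring

theorem continuousOn_potential : ContinuousOn (potential b) (Ioi 0) := by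
  intro x hx
  have : x ≠ 0 := (mem_Ioi.1 hx).ne'
  unfold potential
  fun_prop (disch := positivity)

theorem potential_sub_potential {u v : ℝ} (hu : u ≠ 0) (hv : v ≠ 0) :
    potential b v - potential b u =
      (v - u) * ((v - u) ^ 2 + 3 * (u ^ 2 * (b * v - 1) + v ^ 2 * (b * u - 1))) /
        (6 * u ^ 3 * v ^ 3) := by
  unfold potential
  field_simp
  ring

theorem potential_monotoneOn (hb : 0 < b) : MonotoneOn (potential b) (Ici (1 / b)) := by
  intro u hu v hv huv
  have hbu : 1 ≤ b * u := by rwa [mem_Ici, div_le_iff₀' hb] at hu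
  have hbv : 1 ≤ b * v := by rwa [mem_Ici, div_le_iff₀' hb] at hv
  have hu0 : 0 < u := by nlinarith
  have hv0 : 0 < v := by nlinarith
  rw [← sub_nonneg, potential_sub_potential hu0.ne' hv0.ne']
  apply div_nonneg _ (by positivity)
  apply mul_nonneg (sub_nonneg.2 huv)
  have := mul_nonneg (sq_nonneg u) (sub_nonneg.2 hbv)
  have := mul_nonneg (sq_nonneg v) (sub_nonneg.2 hbu)
  positivity

theorem sq_le_potential_sub (hb : 0 < b) {u v : ℝ} (hu : 1 / b ≤ u) (huv : u ≤ v)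
    (hv : v ≤ 2 / b) : b ^ 5 / 32 * (v - u) ^ 2 ≤ potential b v - potential b u := by
  have hbu : 1 ≤ b * u := by rwa [div_le_iff₀' hb] at hu
  have hbv : b * v ≤ 2 := by rwa [le_div_iff₀' hb] at hv
  have hu0 : 0 < u := by nlinarith
  have hv0 : 0 < v := by nlinarith
  rw [potential_sub_potential hu0.ne' hv0.ne', le_div_iff₀ (by positivity)]
  have hd : 0 ≤ v - u := sub_nonneg.2 huv
  have hbuv : (b * u) * (b * v) ^ 3 ≤ 16 := by
    have := pow_le_pow_left₀ (by positivity) hbv 3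
    nlinarith
  calc b ^ 5 / 32 * (v - u) ^ 2 * (6 * u ^ 3 * v ^ 3)
      = 3 / 16 * (b * u ^ 2 * (v - u) ^ 2) * ((b * u) * (b * v) ^ 3) := by ring
    _ ≤ 3 / 16 * (b * u ^ 2 * (v - u) ^ 2) * 16 := by gcongr
    _ = (v - u) * (3 * (u ^ 2 * (b * (v - u)))) := by ring
    _ ≤ (v - u) * ((v - u) ^ 2 + 3 * (u ^ 2 * (b * v - 1) + v ^ 2 * (b * u - 1))) := by
      gcongr
      have := mul_nonneg (sq_nonneg v) (sub_nonneg.2 hbu)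
      nlinarith [sq_nonneg (v - u)]

theorem le_potential_sub_potential_one_div (hb : 0 < b) {v : ℝ} (hv : 2 / b ≤ v) :
    b ^ 3 / 32 ≤ potential b v - potential b (1 / b) := by
  have hc : 1 / b ≤ 2 / b := by gcongr; norm_num
  have h := sq_le_potential_sub hb le_rfl hc le_rfl
  have hmono := potential_monotoneOn hb hc (hc.trans hv) hv
  have hβ : b ^ 5 / 32 * (2 / b - 1 / b) ^ 2 = b ^ 3 / 32 := by field_simp; ring
  linarith

noncomputable def weight (b ε t : ℝ) : ℝ :=
  exp ((potential b (1 / b) - potential b t) / ε ^ 2) / t ^ 4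

theorem weight_nonneg (ε t : ℝ) : 0 ≤ weight b ε t := by
  unfold weight; positivity

theorem weight_le_one_div_pow (hb : 0 < b) (ε : ℝ) {t : ℝ} (ht : 1 / b ≤ t) :
    weight b ε t ≤ 1 / t ^ 4 := by
  have hc : 1 / b ∈ Ici (1 / b) := self_mem_Ici
  have hmono := potential_monotoneOn hb hc ht ht
  unfold weight
  rw [div_eq_mul_one_div]
  refine mul_le_of_le_one_left (by positivity) (exp_le_one_iff.2 ?_)
  exact div_nonpos_of_nonpos_of_nonneg (by linarith) (sq_nonneg ε)

theorem integrableOn_weight (hb : 0 < b) (ε : ℝ) : IntegrableOn (weight b ε) (Ioi (1 / b)) := by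
  have hc : 0 < 1 / b := by positivity
  refine Integrable.mono' (integrableOn_Ioi_one_div_pow hc 2) ?_ ?_
  · refine ContinuousOn.aestronglyMeasurable ?_ measurableSet_Ioi
    have hp : ContinuousOn (potential b) (Ioi (1 / b)) :=
      continuousOn_potential.mono (Ioi_subset_Ioi hc.le)
    refine ((continuousOn_const.sub hp).div_const _).rexp.div (continuousOn_pow 4) ?_
    intro t ht
    exact pow_ne_zero _ (hc.trans ht).ne'
  · refine ae_restrict_of_forall_mem measurableSet_Ioi fun t ht => ?_
    rw [Real.norm_of_nonneg (weight_nonneg ε t)]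
    exact weight_le_one_div_pow hb ε (le_of_lt ht)

theorem weight_le_gaussian_add (hb : 0 < b) (ε : ℝ) {t : ℝ} (ht : 1 / b ≤ t) :
    weight b ε t ≤
      b ^ 4 * exp (-(b ^ 5 / 32 * (t - 1 / b) ^ 2) / ε ^ 2) +
        exp (-(b ^ 3 / 32) / ε ^ 2) * (1 / t ^ 4) := by
  have ht0 : 0 < t := lt_of_lt_of_le (by positivity) ht
  unfold weight
  rcases le_or_gt t (2 / b) with hnear | hfar
  · have hpot := sq_le_potential_sub hb le_rfl ht hnear
    have hexp : exp ((potential b (1 / b) - potential b t) / ε ^ 2) ≤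
        exp (-(b ^ 5 / 32 * (t - 1 / b) ^ 2) / ε ^ 2) :=
      exp_le_exp.2 (div_le_div_of_nonneg_right (by linarith) (sq_nonneg ε))
    have hpow : 1 / t ^ 4 ≤ b ^ 4 := by
      rw [div_le_iff₀ (by positivity), ← mul_pow]
      exact one_le_pow₀ (by rwa [div_le_iff₀' hb] at ht)
    calc exp ((potential b (1 / b) - potential b t) / ε ^ 2) / t ^ 4
        = exp ((potential b (1 / b) - potential b t) / ε ^ 2) * (1 / t ^ 4) := by ring
      _ ≤ exp (-(b ^ 5 / 32 * (t - 1 / b) ^ 2) / ε ^ 2) * b ^ 4 := by gcongr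
      _ ≤ _ := by nlinarith [exp_pos (-(b ^ 3 / 32) / ε ^ 2), one_div_pos.2 (pow_pos ht0 4)]
  · have hpot := le_potential_sub_potential_one_div hb hfar.le
    have hexp : exp ((potential b (1 / b) - potential b t) / ε ^ 2) ≤
        exp (-(b ^ 3 / 32) / ε ^ 2) :=
      exp_le_exp.2 (div_le_div_of_nonneg_right (by linarith) (sq_nonneg ε))
    calc exp ((potential b (1 / b) - potential b t) / ε ^ 2) / t ^ 4
        = exp ((potential b (1 / b) - potential b t) / ε ^ 2) * (1 / t ^ 4) := by ring
      _ ≤ exp (-(b ^ 3 / 32) / ε ^ 2) * (1 / t ^ 4) := by gcongr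
      _ ≤ _ := le_add_of_nonneg_left (by positivity)

theorem integral_weight_le (hb : 0 < b) :
    ∃ K, ∀ ε ∈ Ioc (0 : ℝ) 1, ∫ t in Ioi (1 / b), weight b ε t ≤ K * ε := by
  refine ⟨b ^ 4 * √(π / (b ^ 5 / 32)) + 32 / 3, fun ε ⟨hε, hε1⟩ => ?_⟩
  have hc : 0 < 1 / b := by positivity
  have hβ : 0 < b ^ 5 / 32 := by positivity
  have hgauss := integrable_exp_neg_mul_sub_sq_div_sq hβ hε.ne' (1 / b)
  have hpow := integrableOn_Ioi_one_div_pow hc 2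
  have htail : exp (-(b ^ 3 / 32) / ε ^ 2) ≤ 32 * ε / b ^ 3 := by
    rw [neg_div]
    refine (exp_neg_le_inv (by positivity)).trans ?_
    rw [inv_div, div_div_eq_mul_div]
    refine div_le_div_of_nonneg_right ?_ (by positivity)
    nlinarith
  have hpow_int : ∫ t in Ioi (1 / b), 1 / t ^ 4 = b ^ 3 / 3 := by
    rw [integral_Ioi_one_div_pow hc 2]; norm_num; field_simp
  calc ∫ t in Ioi (1 / b), weight b ε t
      ≤ ∫ t in Ioi (1 / b), (b ^ 4 * exp (-(b ^ 5 / 32 * (t - 1 / b) ^ 2) / ε ^ 2) +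
          exp (-(b ^ 3 / 32) / ε ^ 2) * (1 / t ^ 4)) :=
        integral_mono_of_nonneg
          (ae_restrict_of_forall_mem measurableSet_Ioi fun t _ => weight_nonneg ε t)
          ((hgauss.integrableOn.const_mul _).add (hpow.const_mul _))
          (ae_restrict_of_forall_mem measurableSet_Ioi fun t ht =>
            weight_le_gaussian_add hb ε (le_of_lt ht))
    _ = b ^ 4 * (∫ t in Ioi (1 / b), exp (-(b ^ 5 / 32 * (t - 1 / b) ^ 2) / ε ^ 2)) +
          exp (-(b ^ 3 / 32) / ε ^ 2) * (b ^ 3 / 3) := by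
        rw [integral_add (hgauss.integrableOn.const_mul _) (hpow.const_mul _),
          integral_const_mul, integral_const_mul, hpow_int]
    _ ≤ b ^ 4 * (ε * √(π / (b ^ 5 / 32))) + 32 * ε / b ^ 3 * (b ^ 3 / 3) := by
        gcongr
        exact setIntegral_exp_neg_mul_sub_sq_div_sq_le hβ hε _ _
    _ = (b ^ 4 * √(π / (b ^ 5 / 32)) + 32 / 3) * ε := by field_simp

noncomputable def innerIntegral (b ε y : ℝ) : ℝ :=
  ∫ w in (1 / b)..y, exp ((potential b w - potential b y) / ε ^ 2)

theorem innerIntegral_nonneg (ε : ℝ) {y : ℝ} (hy : 1 / b ≤ y) : 0 ≤ innerIntegral b ε y :=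
  intervalIntegral.integral_nonneg hy fun _ _ => (exp_pos _).le

theorem innerIntegral_le_sub (hb : 0 < b) (ε : ℝ) {y : ℝ} (hy : 1 / b ≤ y) :
    innerIntegral b ε y ≤ y - 1 / b := by
  have h : ∀ w ∈ uIoc (1 / b) y, ‖exp ((potential b w - potential b y) / ε ^ 2)‖ ≤ 1 := by
    intro w hw
    rw [uIoc_of_le hy] at hw
    have hmono := potential_monotoneOn hb (le_of_lt hw.1) hy hw.2
    rw [Real.norm_of_nonneg (exp_pos _).le, exp_le_one_iff]
    exact div_nonpos_of_nonpos_of_nonneg (by linarith) (sq_nonneg ε)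
  have := (le_abs_self _).trans (intervalIntegral.norm_integral_le_of_norm_le_const h)
  rwa [one_mul, abs_of_nonneg (sub_nonneg.2 hy)] at this

theorem innerIntegral_le_mul_sqrt (hb : 0 < b) {ε : ℝ} (hε : 0 < ε) {y : ℝ} (hy : 1 / b ≤ y)
    (hy2 : y ≤ 2 / b) : innerIntegral b ε y ≤ ε * √(π / (b ^ 5 / 32)) := by
  have hβ : 0 < b ^ 5 / 32 := by positivity
  rw [innerIntegral, intervalIntegral.integral_of_le hy]
  refine le_trans (integral_mono_of_nonneg
    (ae_restrict_of_forall_mem measurableSet_Ioc fun _ _ => (exp_pos _).le)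
    (integrable_exp_neg_mul_sub_sq_div_sq hβ hε.ne' y).integrableOn
    (ae_restrict_of_forall_mem measurableSet_Ioc fun w hw => ?_))
    (setIntegral_exp_neg_mul_sub_sq_div_sq_le hβ hε y _)
  have hpot := sq_le_potential_sub hb (le_of_lt hw.1) hw.2 hy2
  refine exp_le_exp.2 (div_le_div_of_nonneg_right ?_ (sq_nonneg ε))
  linarith [show (w - y) ^ 2 = (y - w) ^ 2 by ring]

theorem setIntegral_Ioi_weight_le (hb : 0 < b) (ε : ℝ) {y : ℝ} (hy : 1 / b ≤ y) :
    ∫ t in Ioi y, weight b ε t ≤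
      exp ((potential b (1 / b) - potential b y) / (2 * ε ^ 2)) *
        ∫ t in Ioi (1 / b), weight b (√2 * ε) t := by
  have hsq : (√2 * ε) ^ 2 = 2 * ε ^ 2 := by rw [mul_pow, sq_sqrt zero_le_two]
  have hint := integrableOn_weight hb (√2 * ε)
  have hpt : ∀ t ∈ Ioi y, weight b ε t ≤
      exp ((potential b (1 / b) - potential b y) / (2 * ε ^ 2)) * weight b (√2 * ε) t := by
    intro t ht
    have hmono := potential_monotoneOn hb hy (hy.trans (le_of_lt ht)) (le_of_lt ht)
    unfold weight
    rw [hsq]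
    calc exp ((potential b (1 / b) - potential b t) / ε ^ 2) / t ^ 4
        = exp ((potential b (1 / b) - potential b t) / (2 * ε ^ 2)) *
            (exp ((potential b (1 / b) - potential b t) / (2 * ε ^ 2)) / t ^ 4) := by
          rw [← mul_div_assoc, ← exp_add]; ring_nf
      _ ≤ _ := by
          gcongr ?_ * _
          exact exp_le_exp.2 (div_le_div_of_nonneg_right (by linarith) (by positivity))
  calc ∫ t in Ioi y, weight b ε t
      ≤ ∫ t in Ioi y, exp ((potential b (1 / b) - potential b y) / (2 * ε ^ 2)) *
          weight b (√2 * ε) t :=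
        integral_mono_of_nonneg
          (ae_restrict_of_forall_mem measurableSet_Ioi fun t _ => weight_nonneg ε t)
          ((hint.mono_set (Ioi_subset_Ioi hy)).const_mul _)
          (ae_restrict_of_forall_mem measurableSet_Ioi hpt)
    _ ≤ _ := by
        rw [integral_const_mul]
        refine mul_le_mul_of_nonneg_left (setIntegral_mono_set hint ?_ ?_) (exp_pos _).le
        · exact ae_restrict_of_forall_mem measurableSet_Ioi fun t _ => weight_nonneg _ t
        · exact (Ioi_subset_Ioi hy).eventuallyLE

theorem tripleIntegral_eq (b ε : ℝ) :
    ∫ y in Ioi (1 / b), ∫ ty in Ioi y, ∫ tw in (1 / b)..y,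
        1 / (y * ty) ^ 4 * exp (1 / ε ^ 2 *
          (potential b (1 / b) - potential b y + potential b tw - potential b ty)) =
      ∫ y in Ioi (1 / b), innerIntegral b ε y / y ^ 4 * ∫ t in Ioi y, weight b ε t := by
  have h : ∀ y ty tw : ℝ, 1 / (y * ty) ^ 4 * exp (1 / ε ^ 2 *
      (potential b (1 / b) - potential b y + potential b tw - potential b ty)) =
        exp ((potential b tw - potential b y) / ε ^ 2) / y ^ 4 * weight b ε ty := by
    intro y ty tw
    unfold weight
    rw [show 1 / ε ^ 2 * (potential b (1 / b) - potential b y + potential b tw - potential b ty) =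
      (potential b tw - potential b y) / ε ^ 2 + (potential b (1 / b) - potential b ty) / ε ^ 2
      by ring, exp_add]
    ring
  simp_rw [h, intervalIntegral.integral_mul_const, intervalIntegral.integral_div,
    integral_const_mul]
  rfl

theorem innerIntegral_div_mul_setIntegral_le (hb : 0 < b) {ε : ℝ} (hε : 0 < ε) {y : ℝ}
    (hy : 1 / b ≤ y) :
    innerIntegral b ε y / y ^ 4 * ∫ t in Ioi y, weight b ε t ≤
      (∫ t in Ioi (1 / b), weight b (√2 * ε) t) *
        (ε * √(π / (b ^ 5 / 32)) * weight b (√2 * ε) y +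
          exp (-(b ^ 3 / 32) / (2 * ε ^ 2)) * (1 / y ^ 3)) := by
  set L := ∫ t in Ioi (1 / b), weight b (√2 * ε) t
  have hy0 : 0 < y := lt_of_lt_of_le (by positivity) hy
  have hL : 0 ≤ L := setIntegral_nonneg measurableSet_Ioi fun t _ => weight_nonneg _ t
  have hM0 : 0 ≤ ∫ t in Ioi y, weight b ε t :=
    setIntegral_nonneg measurableSet_Ioi fun t _ => weight_nonneg ε t
  have hM := setIntegral_Ioi_weight_le hb ε hy
  have hW0 := innerIntegral_nonneg (b := b) ε hy
  rcases le_or_gt y (2 / b) with hnear | hfar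
  · have hW := innerIntegral_le_mul_sqrt hb hε hy hnear
    calc innerIntegral b ε y / y ^ 4 * ∫ t in Ioi y, weight b ε t
        ≤ ε * √(π / (b ^ 5 / 32)) / y ^ 4 *
            (exp ((potential b (1 / b) - potential b y) / (2 * ε ^ 2)) * L) :=
          mul_le_mul (div_le_div_of_nonneg_right hW (by positivity)) hM hM0 (by positivity)
      _ = L * (ε * √(π / (b ^ 5 / 32)) * weight b (√2 * ε) y) := by
          rw [weight, mul_pow, sq_sqrt zero_le_two]; ring
      _ ≤ _ := mul_le_mul_of_nonneg_left (le_add_of_nonneg_right (by positivity)) hL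
  · have hW := (innerIntegral_le_sub hb ε hy).trans (sub_le_self y (by positivity))
    have hpot := le_potential_sub_potential_one_div hb hfar.le
    have hexp : exp ((potential b (1 / b) - potential b y) / (2 * ε ^ 2)) ≤
        exp (-(b ^ 3 / 32) / (2 * ε ^ 2)) :=
      exp_le_exp.2 (div_le_div_of_nonneg_right (by linarith) (by positivity))
    calc innerIntegral b ε y / y ^ 4 * ∫ t in Ioi y, weight b ε t
        ≤ y / y ^ 4 * (exp (-(b ^ 3 / 32) / (2 * ε ^ 2)) * L) :=
          mul_le_mul (div_le_div_of_nonneg_right hW (by positivity))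
            (hM.trans (mul_le_mul_of_nonneg_right hexp hL)) hM0 (by positivity)
      _ = L * (exp (-(b ^ 3 / 32) / (2 * ε ^ 2)) * (1 / y ^ 3)) := by
          field_simp
      _ ≤ _ := mul_le_mul_of_nonneg_left (le_add_of_nonneg_left
          (mul_nonneg (by positivity) (weight_nonneg _ y))) hL

theorem integral_innerIntegral_div_mul_setIntegral_le (hb : 0 < b) {ε : ℝ} (hε : 0 < ε) :
    ∫ y in Ioi (1 / b), innerIntegral b ε y / y ^ 4 * ∫ t in Ioi y, weight b ε t ≤
      (∫ t in Ioi (1 / b), weight b (√2 * ε) t) *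
        (ε * √(π / (b ^ 5 / 32)) * (∫ t in Ioi (1 / b), weight b (√2 * ε) t) +
          exp (-(b ^ 3 / 32) / (2 * ε ^ 2)) * (b ^ 2 / 2)) := by
  have hc : 0 < 1 / b := by positivity
  have hweight := integrableOn_weight hb (√2 * ε)
  have hpow : IntegrableOn (fun y : ℝ => 1 / y ^ 3) (Ioi (1 / b)) :=
    integrableOn_Ioi_one_div_pow hc 1
  have hpow_int : ∫ y in Ioi (1 / b), 1 / y ^ 3 = b ^ 2 / 2 := by
    rw [integral_Ioi_one_div_pow hc 1]; norm_num; field_simp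
  have hdom := ((hweight.const_mul (ε * √(π / (b ^ 5 / 32)))).add
    (hpow.const_mul (exp (-(b ^ 3 / 32) / (2 * ε ^ 2))))).const_mul
    (∫ t in Ioi (1 / b), weight b (√2 * ε) t)
  refine (integral_mono_of_nonneg ?_ hdom ?_).trans_eq ?_
  · refine ae_restrict_of_forall_mem measurableSet_Ioi fun y hy => ?_
    have hy0 : 0 < y := hc.trans hy
    exact mul_nonneg (div_nonneg (innerIntegral_nonneg ε (le_of_lt hy)) (by positivity))
      (setIntegral_nonneg measurableSet_Ioi fun t _ => weight_nonneg ε t)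
  · exact ae_restrict_of_forall_mem measurableSet_Ioi fun y hy =>
      innerIntegral_div_mul_setIntegral_le hb hε (le_of_lt hy)
  · simp only [Pi.add_apply]
    rw [integral_const_mul, integral_add (hweight.const_mul _) (hpow.const_mul _),
      integral_const_mul, integral_const_mul, hpow_int]

theorem tripleIntegral_le_mul_pow_three (hb : 0 < b) :
    ∃ C, ∀ ε ∈ Ioc (0 : ℝ) (1 / 2),
      ∫ y in Ioi (1 / b), innerIntegral b ε y / y ^ 4 * ∫ t in Ioi y, weight b ε t ≤
        C * ε ^ 3 := by
  obtain ⟨K, hK⟩ := integral_weight_le hb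
  refine ⟨√2 * K * (√2 * K * √(π / (b ^ 5 / 32)) + 32 / b), fun ε ⟨hε, hε2⟩ => ?_⟩
  have hsqrt2 : √2 ≤ 2 := by nlinarith [sq_sqrt (zero_le_two (α := ℝ)), sqrt_nonneg 2]
  have hL := hK (√2 * ε) ⟨by positivity, by nlinarith⟩
  have hL0 : 0 ≤ ∫ t in Ioi (1 / b), weight b (√2 * ε) t :=
    setIntegral_nonneg measurableSet_Ioi fun t _ => weight_nonneg _ t
  have htail : exp (-(b ^ 3 / 32) / (2 * ε ^ 2)) ≤ 64 * ε ^ 2 / b ^ 3 := by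
    rw [neg_div]
    refine (exp_neg_le_inv (by positivity)).trans_eq ?_
    field_simp
    ring
  calc _ ≤ _ := integral_innerIntegral_div_mul_setIntegral_le hb hε
    _ ≤ K * (√2 * ε) * (ε * √(π / (b ^ 5 / 32)) * (K * (√2 * ε)) +
          64 * ε ^ 2 / b ^ 3 * (b ^ 2 / 2)) := by
        refine mul_le_mul hL (add_le_add ?_ ?_) (by positivity) (hL0.trans hL)
        · exact mul_le_mul_of_nonneg_left hL (by positivity)
        · exact mul_le_mul_of_nonneg_right htail (by positivity)
    _ = _ := by field_simp; ring

end Downcrossing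

/-- (Uniform bound (4.27) for the second moment of the downcrossing time.) For every `b > 0`,
with `f(x) := 1/(3x³) − b/(2x²)`, the quantity
`(1/ε³)·∫_{1/b}^∞ ∫_{y}^{∞} ∫_{1/b}^{y} (y·ỹ)⁻⁴·exp((1/ε²)(−b³/6 − f(y) + f(w̃) − f(ỹ))) dw̃ dỹ dy`
has finite limsup as `ε → 0⁺`, i.e. it is eventually bounded above near `0⁺`. -/
theorem statement18 (b : ℝ) (hb : 0 < b)
    (f : ℝ → ℝ) (hf : ∀ x : ℝ, f x = 1 / (3 * x ^ 3) - b / (2 * x ^ 2)) :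
    ∃ C : ℝ, ∀ᶠ ε in 𝓝[>] (0 : ℝ),
      1 / ε ^ 3 *
          ∫ y in Ioi (1 / b), ∫ ty in Ioi y, ∫ tw in (1 / b)..y,
            1 / (y * ty) ^ 4 *
              Real.exp (1 / ε ^ 2 * (-b ^ 3 / 6 - f y + f tw - f ty)) ≤ C := by
  obtain rfl : f = Downcrossing.potential b := funext hf
  obtain ⟨C, hC⟩ := Downcrossing.tripleIntegral_le_mul_pow_three hb
  refine ⟨C, ?_⟩
  filter_upwards [Ioc_mem_nhdsGT (show (0 : ℝ) < 1 / 2 by norm_num)] with ε hε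
  have hε0 : 0 < ε := hε.1
  rw [← Downcrossing.potential_one_div hb.ne', Downcrossing.tripleIntegral_eq]
  calc _ ≤ 1 / ε ^ 3 * (C * ε ^ 3) := mul_le_mul_of_nonneg_left (hC ε hε) (by positivity)
    _ = C := by field_simp
end

section
/- (Proposition 4.16 — limit of the hitting probability from a fixed starting point in the Rabi model, expressed via the scale function.) For all b > 0 and 0 < x < z one has lim_{ε→0⁺} ( ∫_x^z exp(ε/(3y³) − b/(2y²)) dy ) / ( ∫_{ε/b}^z exp(ε/(3y³) − b/(2y²)) dy ) = ( ∫_x^z e^{−b/(2y²)} dy ) / ( ∫_0^z e^{−b/(2y²)} dy ). The left-hand ratio equals the probability that the diffusion started at x hits level ε/b before level z. -/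
open MeasureTheory Real Set Filter
open scoped Topology

private lemma aux_g_le_one {b : ℝ} (hb : 0 < b) (y : ℝ) :
    Real.exp (-(b / (2 * y ^ 2))) ≤ 1 := by
  have h : 0 ≤ b / (2 * y ^ 2) := by positivity
  calc Real.exp (-(b / (2 * y ^ 2))) ≤ Real.exp 0 := Real.exp_le_exp.mpr (by linarith)
    _ = 1 := Real.exp_zero

private lemma aux_g_int {b : ℝ} (hb : 0 < b) (a c : ℝ) :
    IntervalIntegrable (fun y => Real.exp (-(b / (2 * y ^ 2)))) volume a c := by
  have hmeas : Measurable fun y : ℝ => Real.exp (-(b / (2 * y ^ 2))) := by measurability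
  refine (intervalIntegrable_const (c := (1:ℝ))).mono_fun
    (hmeas.aestronglyMeasurable.restrict) ?_
  filter_upwards with y
  simp only [Real.norm_eq_abs, abs_of_pos (Real.exp_pos _), norm_one]
  exact aux_g_le_one hb y

private lemma aux_h_contOn (ε b : ℝ) :
    ContinuousOn (fun y : ℝ => Real.exp (ε / (3 * y ^ 3) - b / (2 * y ^ 2)))
      {y : ℝ | y ≠ 0} := by
  apply Real.continuous_exp.comp_continuousOn
  apply ContinuousOn.sub
  · exact continuousOn_const.div (by fun_prop)
      (fun y hy => mul_ne_zero three_ne_zero (pow_ne_zero _ hy))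
  · exact continuousOn_const.div (by fun_prop)
      (fun y hy => mul_ne_zero two_ne_zero (pow_ne_zero _ hy))

private lemma aux_h_int {ε b a c : ℝ} (ha : 0 < a) (hc : 0 < c) :
    IntervalIntegrable (fun y => Real.exp (ε / (3 * y ^ 3) - b / (2 * y ^ 2))) volume a c := by
  refine ((aux_h_contOn ε b).mono ?_).intervalIntegrable
  intro y hy
  have : min a c ≤ y := hy.1
  have : 0 < y := lt_of_lt_of_le (lt_min ha hc) this
  exact this.ne'

/-- (Proposition 4.16 — limit of the hitting probability from a fixed starting point in the Rabi
model.) For all `b > 0` and `0 < x < z`: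
`lim_{ε→0⁺} (∫_x^z exp(ε/(3y³) − b/(2y²)) dy)/(∫_{ε/b}^z exp(ε/(3y³) − b/(2y²)) dy)
  = (∫_x^z e^{−b/(2y²)} dy)/(∫_0^z e^{−b/(2y²)} dy)`. -/
theorem statement19 (b x z : ℝ) (hb : 0 < b) (hx : 0 < x) (hxz : x < z) :
    Tendsto
      (fun ε : ℝ =>
        (∫ y in x..z, Real.exp (ε / (3 * y ^ 3) - b / (2 * y ^ 2))) /
          (∫ y in (ε / b)..z, Real.exp (ε / (3 * y ^ 3) - b / (2 * y ^ 2))))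
      (𝓝[>] (0 : ℝ))
      (𝓝 ((∫ y in x..z, Real.exp (-(b / (2 * y ^ 2)))) /
        (∫ y in (0 : ℝ)..z, Real.exp (-(b / (2 * y ^ 2)))))) := by
  have hz : 0 < z := hx.trans hxz
  set g : ℝ → ℝ := fun y => Real.exp (-(b / (2 * y ^ 2))) with hgdef
  set I₀ : ℝ := ∫ y in (0:ℝ)..z, g y with hI₀def
  set Nx : ℝ := ∫ y in x..z, g y with hNxdef
  have hI0pos : 0 < I₀ :=
    intervalIntegral.intervalIntegral_pos_of_pos_on (aux_g_int hb 0 z)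
      (fun y _ => Real.exp_pos _) hz
  -- numerator
  have hN : Tendsto (fun ε : ℝ => ∫ y in x..z,
      Real.exp (ε / (3 * y ^ 3) - b / (2 * y ^ 2))) (𝓝[>] 0) (𝓝 Nx) := by
    have hupper : Tendsto (fun ε : ℝ => Real.exp (ε / (3 * x ^ 3)) * Nx) (𝓝[>] 0) (𝓝 Nx) := by
      have hc : Continuous fun ε : ℝ => Real.exp (ε / (3 * x ^ 3)) * Nx := by fun_prop
      have h0 := hc.tendsto 0
      simp only [zero_div, Real.exp_zero, one_mul] at h0
      exact h0.mono_left nhdsWithin_le_nhds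
    refine tendsto_of_tendsto_of_tendsto_of_le_of_le' tendsto_const_nhds hupper ?_ ?_
    · filter_upwards [self_mem_nhdsWithin] with ε (hε : 0 < ε)
      refine intervalIntegral.integral_mono_on hxz.le (aux_g_int hb x z)
        (aux_h_int hx hz) ?_
      intro y hy
      have hy0 : 0 < y := lt_of_lt_of_le hx hy.1
      have h1 : 0 ≤ ε / (3 * y ^ 3) := by positivity
      exact Real.exp_le_exp.mpr (by linarith)
    · filter_upwards [self_mem_nhdsWithin] with ε (hε : 0 < ε)
      have hint2 : IntervalIntegrable (fun y => Real.exp (ε / (3 * x ^ 3)) * g y)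
          volume x z := (aux_g_int hb x z).const_mul _
      calc (∫ y in x..z, Real.exp (ε / (3 * y ^ 3) - b / (2 * y ^ 2)))
          ≤ ∫ y in x..z, Real.exp (ε / (3 * x ^ 3)) * g y := by
            refine intervalIntegral.integral_mono_on hxz.le (aux_h_int hx hz) hint2 ?_
            intro y hy
            have hy0 : 0 < y := lt_of_lt_of_le hx hy.1
            have hle : ε / (3 * y ^ 3) ≤ ε / (3 * x ^ 3) := by
              gcongr
              exact hy.1
            rw [hgdef, ← Real.exp_add]
            exact Real.exp_le_exp.mpr (by linarith)
        _ = Real.exp (ε / (3 * x ^ 3)) * Nx := intervalIntegral.integral_const_mul _ _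
  -- denominator
  have hD : Tendsto (fun ε : ℝ => ∫ y in (ε / b)..z,
      Real.exp (ε / (3 * y ^ 3) - b / (2 * y ^ 2))) (𝓝[>] 0) (𝓝 I₀) := by
    set δ : ℝ → ℝ := fun ε => Real.sqrt (Real.sqrt ε) with hδdef
    have hδ0 : Tendsto δ (𝓝[>] 0) (𝓝 0) := by
      have : Continuous δ := by fun_prop
      have h0 := this.tendsto 0
      simp only [hδdef, Real.sqrt_zero] at h0
      exact h0.mono_left nhdsWithin_le_nhds
    have hlow : Tendsto (fun ε : ℝ => I₀ - ε / b) (𝓝[>] 0) (𝓝 I₀) := by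
      have hc : Continuous fun ε : ℝ => I₀ - ε / b := by fun_prop
      have h0 := hc.tendsto 0
      simp only [zero_div, sub_zero] at h0
      exact h0.mono_left nhdsWithin_le_nhds
    have hup : Tendsto (fun ε : ℝ => δ ε + Real.exp (δ ε / 3) * I₀) (𝓝[>] 0) (𝓝 I₀) := by
      have : Tendsto (fun t : ℝ => t + Real.exp (t / 3) * I₀) (𝓝 0) (𝓝 I₀) := by
        have hc : Continuous fun t : ℝ => t + Real.exp (t / 3) * I₀ := by fun_prop
        have h0 := hc.tendsto 0
        simpa using h0
      exact this.comp hδ0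
    have hm : (0:ℝ) < min 1 (min b z) := by positivity
    refine tendsto_of_tendsto_of_tendsto_of_le_of_le' hlow hup ?_ ?_
    all_goals {
      filter_upwards [self_mem_nhdsWithin, hδ0.eventually (gt_mem_nhds hm)]
        with ε (hε : 0 < ε) hδm
      have hδpos : 0 < δ ε := Real.sqrt_pos.mpr (Real.sqrt_pos.mpr hε)
      have hδ1 : δ ε ≤ 1 := le_of_lt (lt_of_lt_of_le hδm (min_le_left _ _))
      have hδb : δ ε ≤ b := le_of_lt (lt_of_lt_of_le hδm ((min_le_right _ _).trans (min_le_left _ _)))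
      have hδz : δ ε ≤ z := le_of_lt (lt_of_lt_of_le hδm ((min_le_right _ _).trans (min_le_right _ _)))
      have hδ4 : (δ ε) ^ 4 = ε := by
        have h1 : (δ ε) ^ 2 = Real.sqrt ε := Real.sq_sqrt (Real.sqrt_nonneg ε)
        have h2 : (Real.sqrt ε) ^ 2 = ε := Real.sq_sqrt hε.le
        nlinarith [h1, h2]
      have hδ3 : (δ ε) ^ 3 ≤ b := by
        have h31 := pow_le_pow_of_le_one hδpos.le hδ1 (show 1 ≤ 3 by norm_num)
        rw [pow_one] at h31
        linarith
      have hεbδ : ε / b ≤ δ ε := by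
        rw [div_le_iff₀ hb]
        nlinarith
      have hεb0 : 0 < ε / b := div_pos hε hb
      have hεbz : ε / b ≤ z := hεbδ.trans hδz
      first
      | -- lower bound : I₀ - ε / b ≤ D ε
        ( have step1 : (∫ y in (ε/b)..z, g y) ≤
            ∫ y in (ε/b)..z, Real.exp (ε / (3 * y ^ 3) - b / (2 * y ^ 2)) := by
            refine intervalIntegral.integral_mono_on hεbz (aux_g_int hb _ _)
              (aux_h_int hεb0 hz) ?_
            intro y hy
            have hy0 : 0 < y := lt_of_lt_of_le hεb0 hy.1
            have h1 : 0 ≤ ε / (3 * y ^ 3) := by positivity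
            exact Real.exp_le_exp.mpr (by linarith)
          have hadj : (∫ y in (0:ℝ)..(ε/b), g y) + (∫ y in (ε/b)..z, g y) = I₀ :=
            intervalIntegral.integral_add_adjacent_intervals (aux_g_int hb _ _) (aux_g_int hb _ _)
          have hsmall : (∫ y in (0:ℝ)..(ε/b), g y) ≤ ε / b := by
            calc (∫ y in (0:ℝ)..(ε/b), g y) ≤ ∫ _ in (0:ℝ)..(ε/b), (1:ℝ) :=
                intervalIntegral.integral_mono_on hεb0.le (aux_g_int hb _ _)
                  intervalIntegrable_const (fun y _ => aux_g_le_one hb y)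
              _ = ε / b := by simp
          linarith )
      | -- upper bound : D ε ≤ δ ε + exp (δ ε / 3) * I₀
        ( have hadj : (∫ y in (ε/b)..(δ ε), Real.exp (ε / (3 * y ^ 3) - b / (2 * y ^ 2)))
              + (∫ y in (δ ε)..z, Real.exp (ε / (3 * y ^ 3) - b / (2 * y ^ 2)))
              = ∫ y in (ε/b)..z, Real.exp (ε / (3 * y ^ 3) - b / (2 * y ^ 2)) :=
            intervalIntegral.integral_add_adjacent_intervals (aux_h_int hεb0 hδpos)
              (aux_h_int hδpos hz)
          have hpart1 : (∫ y in (ε/b)..(δ ε), Real.exp (ε / (3 * y ^ 3) - b / (2 * y ^ 2)))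
              ≤ δ ε := by
            calc (∫ y in (ε/b)..(δ ε), Real.exp (ε / (3 * y ^ 3) - b / (2 * y ^ 2)))
                ≤ ∫ _ in (ε/b)..(δ ε), (1:ℝ) := by
                  refine intervalIntegral.integral_mono_on hεbδ (aux_h_int hεb0 hδpos)
                    intervalIntegrable_const ?_
                  intro y hy
                  have hy0 : 0 < y := lt_of_lt_of_le hεb0 hy.1
                  have hεy : ε ≤ b * y := by
                    have := hy.1
                    rw [div_le_iff₀ hb] at this
                    linarith [this]
                  have hexp : ε / (3 * y ^ 3) ≤ b / (2 * y ^ 2) := by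
                    rw [div_le_div_iff₀ (by positivity) (by positivity)]
                    nlinarith
                  calc Real.exp (ε / (3 * y ^ 3) - b / (2 * y ^ 2)) ≤ Real.exp 0 :=
                      Real.exp_le_exp.mpr (by linarith)
                    _ = 1 := Real.exp_zero
              _ = δ ε - ε / b := by simp
              _ ≤ δ ε := by linarith
          have hpart2 : (∫ y in (δ ε)..z, Real.exp (ε / (3 * y ^ 3) - b / (2 * y ^ 2)))
              ≤ Real.exp (δ ε / 3) * I₀ := by
            have hint2 : IntervalIntegrable (fun y => Real.exp (δ ε / 3) * g y)
                volume (δ ε) z := (aux_g_int hb _ _).const_mul _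
            have hgz : (∫ y in (δ ε)..z, g y) ≤ I₀ := by
              have hadj2 : (∫ y in (0:ℝ)..(δ ε), g y) + (∫ y in (δ ε)..z, g y) = I₀ :=
                intervalIntegral.integral_add_adjacent_intervals (aux_g_int hb _ _)
                  (aux_g_int hb _ _)
              have hnn : 0 ≤ ∫ y in (0:ℝ)..(δ ε), g y :=
                intervalIntegral.integral_nonneg hδpos.le (fun y _ => (Real.exp_pos _).le)
              linarith
            calc (∫ y in (δ ε)..z, Real.exp (ε / (3 * y ^ 3) - b / (2 * y ^ 2)))
                ≤ ∫ y in (δ ε)..z, Real.exp (δ ε / 3) * g y := by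
                  refine intervalIntegral.integral_mono_on hδz (aux_h_int hδpos hz) hint2 ?_
                  intro y hy
                  have hy0 : 0 < y := lt_of_lt_of_le hδpos hy.1
                  have hexp : ε / (3 * y ^ 3) ≤ δ ε / 3 := by
                    rw [div_le_div_iff₀ (by positivity) (by norm_num)]
                    nlinarith [hy.1, pow_le_pow_left₀ hδpos.le hy.1 3]
                  rw [hgdef, ← Real.exp_add]
                  exact Real.exp_le_exp.mpr (by linarith)
              _ = Real.exp (δ ε / 3) * (∫ y in (δ ε)..z, g y) :=
                  intervalIntegral.integral_const_mul _ _
              _ ≤ Real.exp (δ ε / 3) * I₀ :=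
                  mul_le_mul_of_nonneg_left hgz (Real.exp_pos _).le
          linarith )
    }
  exact hN.div hD hI0pos.ne'
end
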